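/- A functor F : C → D between categories is an inclusion of a cofactor if and only if F is fully faithful, injective on isomorphism classes of objects, and has the property that for any morphism g : d → d' in D, if either d or d' is isomorphic to an object in the image of F, then g is isomorphic (in the arrow category) to the image of a morphism of C; equivalently, every solid square [0] → C, [1] → D over F, with [0] → [1] either of the two inclusions, admits a diagonal filler. -/

import Mathlib

/-!
A cofactor inclusion `C ⥤ C ⊕ E ≌ D` is fully faithful, and since there are no morphisms between
the two summands, any morphism touching the essential image of `C` lies entirely in it; both
properties are invariant under equivalence. Conversely, given such an `F`, let `E` be the full
subcategory of objects outside the essential image. The lifting property says there are no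
morphisms between the essential image and `E`, so `F.sum' E.ι : C ⊕ E ⥤ D` is fully faithful,
and it is essentially surjective by construction.
-/

open CategoryTheory

universe v u

/-- A functor `F : C ⥤ D` is an inclusion of a cofactor if there is a
category `E` and an equivalence `C ⊕ E ≌ D` under `C`. -/
def IsCofactorInclusion {C D : Type u} [Category.{v} C] [Category.{v} D]
    (F : C ⥤ D) : Prop :=
  ∃ (E : Type u) (iE : Category.{v} E),
    letI := iE
    ∃ e : (C ⊕ E) ≌ D, Nonempty (Sum.inl_ C E ⋙ e.functor ≅ F)

namespace CategoryTheory

variable {A B C D D' : Type*} [Category A] [Category B] [Category C] [Category D] [Category D']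

namespace Functor

/-- The diagonal filler property for squares `[0] → C`, `[1] → D` over `F`, with `[0] → [1]` either
endpoint inclusion. -/
def LiftsArrowsAtEssImage (F : C ⥤ D) : Prop :=
  ∀ f : Arrow D, F.essImage f.left ∨ F.essImage f.right → F.mapArrow.essImage f

lemma mapArrow_essImage_mk_iff (F : C ⥤ D) {d d' : D} (g : d ⟶ d') :
    F.mapArrow.essImage (Arrow.mk g) ↔
      ∃ (X Y : C) (u : X ⟶ Y), Nonempty (Arrow.mk (F.map u) ≅ Arrow.mk g) :=
  ⟨fun ⟨a, h⟩ => ⟨a.left, a.right, a.hom, h⟩, fun ⟨_, _, u, h⟩ => ⟨Arrow.mk u, h⟩⟩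

lemma liftsArrowsAtEssImage_iff (F : C ⥤ D) :
    F.LiftsArrowsAtEssImage ↔
      ∀ (d d' : D) (g : d ⟶ d'),
        ((∃ X : C, Nonempty (F.obj X ≅ d)) ∨ (∃ X : C, Nonempty (F.obj X ≅ d'))) →
          ∃ (X Y : C) (u : X ⟶ Y), Nonempty (Arrow.mk (F.map u) ≅ Arrow.mk g) := by
  simp only [← mapArrow_essImage_mk_iff]
  exact ⟨fun h _ _ g => h (Arrow.mk g), fun h f => h f.left f.right f.hom⟩

lemma essImage_comp_equivalence_functor_iff (F : C ⥤ D) (e : D ≌ D') {Y : D'} :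
    (F ⋙ e.functor).essImage Y ↔ F.essImage (e.inverse.obj Y) :=
  ⟨fun ⟨X, ⟨i⟩⟩ => ⟨X, ⟨e.unitIso.app _ ≪≫ e.inverse.mapIso i⟩⟩,
    fun ⟨X, ⟨i⟩⟩ => ⟨X, ⟨e.functor.mapIso i ≪≫ e.counitIso.app Y⟩⟩⟩

namespace LiftsArrowsAtEssImage

variable {F G : C ⥤ D}

lemma of_iso (h : F.LiftsArrowsAtEssImage) (e : F ≅ G) : G.LiftsArrowsAtEssImage :=
  fun f hf => essImage.ofNatIso ((mapArrowFunctor C D).mapIso e)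
    (h f (hf.imp (essImage.ofNatIso e.symm) (essImage.ofNatIso e.symm)))

lemma comp_equivalence_functor (h : F.LiftsArrowsAtEssImage) (e : D ≌ D') :
    (F ⋙ e.functor).LiftsArrowsAtEssImage := fun f hf =>
  (essImage_comp_equivalence_functor_iff F.mapArrow (mapArrowEquivalence e)).2 <|
    h (e.inverse.mapArrow.obj f) <|
      hf.imp (essImage_comp_equivalence_functor_iff F e).1
        (essImage_comp_equivalence_functor_iff F e).1

lemma essImage_left_iff_right (h : F.LiftsArrowsAtEssImage) {d d' : D} (g : d ⟶ d') :
    F.essImage d ↔ F.essImage d' := by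
  refine ⟨fun hd => ?_, fun hd' => ?_⟩
  · obtain ⟨a, ⟨i⟩⟩ := h (Arrow.mk g) (Or.inl hd)
    exact ⟨a.right, ⟨Arrow.rightFunc.mapIso i⟩⟩
  · obtain ⟨a, ⟨i⟩⟩ := h (Arrow.mk g) (Or.inr hd')
    exact ⟨a.left, ⟨Arrow.leftFunc.mapIso i⟩⟩

end LiftsArrowsAtEssImage

instance faithful_sum' (F : A ⥤ C) (G : B ⥤ C) [F.Faithful] [G.Faithful] :
    (F.sum' G).Faithful where
  map_injective {X Y} f g hfg := by
    rcases X with a | x <;> rcases Y with b | y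
    · exact ULift.ext _ _ (F.map_injective hfg)
    · exact (hom_inl_inr_false (f := f)).elim
    · exact (hom_inr_inl_false (f := f)).elim
    · exact ULift.ext _ _ (G.map_injective hfg)

lemma full_sum' (F : A ⥤ C) (G : B ⥤ C) [F.Full] [G.Full]
    (hFG : ∀ a b, IsEmpty (F.obj a ⟶ G.obj b)) (hGF : ∀ a b, IsEmpty (G.obj b ⟶ F.obj a)) :
    (F.sum' G).Full where
  map_surjective {X Y} φ := by
    rcases X with a | x <;> rcases Y with b | y
    · exact ⟨ULift.up (F.preimage φ), F.map_preimage φ⟩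
    · exact (hFG a y).elim φ
    · exact (hGF b x).elim φ
    · exact ⟨ULift.up (G.preimage φ), G.map_preimage φ⟩

lemma essSurj_sum' (F : A ⥤ C) (G : B ⥤ C) (h : ∀ c, F.essImage c ∨ G.essImage c) :
    (F.sum' G).EssSurj where
  mem_essImage c := (h c).elim (fun ⟨a, i⟩ => ⟨Sum.inl a, i⟩) (fun ⟨b, i⟩ => ⟨Sum.inr b, i⟩)

end Functor

instance (C E : Type*) [Category C] [Category E] : (Sum.inl_ C E).Full where
  map_surjective f := ⟨f.down, rfl⟩

instance (C E : Type*) [Category C] [Category E] : (Sum.inl_ C E).Faithful where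
  map_injective h := congrArg ULift.down h

lemma liftsArrowsAtEssImage_inl (C E : Type*) [Category C] [Category E] :
    (Sum.inl_ C E).LiftsArrowsAtEssImage := by
  rintro ⟨c | x, c' | x', φ⟩ hφ
  · exact ⟨Arrow.mk φ.down, ⟨Iso.refl _⟩⟩
  · exact (hom_inl_inr_false (f := φ)).elim
  · exact (hom_inr_inl_false (f := φ)).elim
  · obtain ⟨_, ⟨i⟩⟩ | ⟨_, ⟨i⟩⟩ := hφ <;> exact (hom_inl_inr_false (f := i.hom)).elim

end CategoryTheory

namespace IsCofactorInclusion

variable {C D : Type u} [Category.{v} C] [Category.{v} D] {F : C ⥤ D}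

lemma full (h : IsCofactorInclusion F) : F.Full := by
  obtain ⟨E, _, e, ⟨i⟩⟩ := h
  exact Functor.Full.of_iso i

lemma faithful (h : IsCofactorInclusion F) : F.Faithful := by
  obtain ⟨E, _, e, ⟨i⟩⟩ := h
  exact Functor.Faithful.of_iso i

lemma liftsArrowsAtEssImage (h : IsCofactorInclusion F) : F.LiftsArrowsAtEssImage := by
  obtain ⟨E, _, e, ⟨i⟩⟩ := h
  exact ((liftsArrowsAtEssImage_inl C E).comp_equivalence_functor e).of_iso i

end IsCofactorInclusion

lemma isCofactorInclusion_of_liftsArrowsAtEssImage {C D : Type u} [Category.{v} C]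
    [Category.{v} D] {F : C ⥤ D} [F.Full] [F.Faithful] (h : F.LiftsArrowsAtEssImage) :
    IsCofactorInclusion F := by
  let E := F.essImageᶜ
  have : (F.sum' E.ι).Full := Functor.full_sum' F E.ι
    (fun a y => ⟨fun φ => y.property ((h.essImage_left_iff_right φ).1 (F.obj_mem_essImage a))⟩)
    (fun b x => ⟨fun φ => x.property ((h.essImage_left_iff_right φ).2 (F.obj_mem_essImage b))⟩)
  have : (F.sum' E.ι).EssSurj := Functor.essSurj_sum' F E.ι fun d =>
    (em (F.essImage d)).imp_right fun hd => ⟨⟨d, hd⟩, ⟨Iso.refl _⟩⟩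
  have : (F.sum' E.ι).IsEquivalence := {}
  exact ⟨E.FullSubcategory, inferInstance, (F.sum' E.ι).asEquivalence,
    ⟨Functor.inlCompSum' F E.ι⟩⟩

/-- A functor is an inclusion of a cofactor iff it is fully faithful,
injective on isomorphism classes of objects, and every morphism of `D` whose
source or target is isomorphic to an object in the image is isomorphic in the
arrow category to the image of a morphism of `C`. -/
theorem statement12 {C D : Type u} [Category.{v} C] [Category.{v} D]
    (F : C ⥤ D) :
    IsCofactorInclusion F ↔
      (F.Full ∧ F.Faithful ∧
        (∀ X Y : C, Nonempty (F.obj X ≅ F.obj Y) → Nonempty (X ≅ Y)) ∧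
        ∀ (d d' : D) (g : d ⟶ d'),
          ((∃ X : C, Nonempty (F.obj X ≅ d)) ∨
            (∃ X : C, Nonempty (F.obj X ≅ d'))) →
          ∃ (X Y : C) (u : X ⟶ Y),
            Nonempty (Arrow.mk (F.map u) ≅ Arrow.mk g)) := by
  rw [← F.liftsArrowsAtEssImage_iff]
  constructor
  · intro h
    have := h.full
    have := h.faithful
    exact ⟨h.full, h.faithful, fun X Y ⟨i⟩ => ⟨F.preimageIso i⟩, h.liftsArrowsAtEssImage⟩
  · rintro ⟨_, _, -, h⟩
    exact isCofactorInclusion_of_liftsArrowsAtEssImage h
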